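/- arXiv:1304.5712 — 4 statements merged into one kernel-verified Lean document; each statement's English description precedes it below -/
import Mathlib

section
/- For x ∈ ℝ \ {0} and 0 < ε < |x|, the map g_{x,ε}(z) = z + ε²/(z - x) is a conformal (holomorphic injective) map from ℍ \ B̄(x,ε) onto ℍ, where ℍ = {z ∈ ℂ : Im z > 0} and B̄(x,ε) is the closed disc of radius ε centered at x. -/
open Complex Set

/-- The map `g_{x,ε}(z) = z + ε²/(z - x)`. -/
noncomputable def gMap (x ε : ℝ) (z : ℂ) : ℂ := z + (ε : ℂ)^2 / (z - x)

/-!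
Translating by `x` turns `g_{x,ε}` into the Joukowski map `J(w) = w + ε²/w`, and
`Im J(w) = Im w · (1 - ε²/|w|²)`, so `J` sends `ℍ \ B̄(0,ε)` into `ℍ`. If `J(w₁) = J(w₂)` then
`w₁ = w₂` or `w₁w₂ = ε²`, and the latter is impossible when `|w₁|, |w₂| > ε`. Conversely the two
solutions of `J(w) = ζ` have product `ε²`, so one of them satisfies `|w| ≥ ε`; for `Im ζ > 0` the
formula for `Im J` then forces `|w| > ε` and `Im w > 0`.
-/

noncomputable def joukowski (r : ℝ) (w : ℂ) : ℂ := w + (r : ℂ) ^ 2 / w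

namespace joukowski

variable {r : ℝ}

theorem im_eq (r : ℝ) (w : ℂ) : (joukowski r w).im = w.im * (1 - r ^ 2 / normSq w) := by
  rw [joukowski, add_im, div_im, ← ofReal_pow, ofReal_re, ofReal_im]
  ring

theorem im_pos (hr : 0 ≤ r) {w : ℂ} (hw : 0 < w.im) (hwr : r < ‖w‖) :
    0 < (joukowski r w).im := by
  have hsq : r ^ 2 < normSq w := by
    rw [← Complex.sq_norm]; exact pow_lt_pow_left₀ hwr hr two_ne_zero
  rw [im_eq]
  exact mul_pos hw (sub_pos.2 ((div_lt_one ((sq_nonneg r).trans_lt hsq)).2 hsq))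

theorem im_pos_and_lt_norm_of_im_pos (hr : 0 ≤ r) {w : ℂ} (hwr : r ≤ ‖w‖)
    (h : 0 < (joukowski r w).im) : 0 < w.im ∧ r < ‖w‖ := by
  rw [im_eq] at h
  have hsq : r ^ 2 ≤ normSq w := by rw [← Complex.sq_norm]; gcongr
  have hw : 0 < w.im :=
    pos_of_mul_pos_left h (sub_nonneg.2 (div_le_one_of_le₀ hsq (normSq_nonneg w)))
  refine ⟨hw, hwr.lt_of_ne ?_⟩
  rintro rfl
  have : normSq w ≠ 0 := normSq_pos.2 (by rintro rfl; simp at hw) |>.ne'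
  rw [Complex.sq_norm, div_self this, sub_self, mul_zero] at h
  exact h.false

theorem injOn (hr : 0 ≤ r) : InjOn (joukowski r) {w | r < ‖w‖} := by
  intro w₁ hw₁ w₂ hw₂ h
  have hne₁ : w₁ ≠ 0 := norm_pos_iff.1 (hr.trans_lt hw₁)
  have hne₂ : w₂ ≠ 0 := norm_pos_iff.1 (hr.trans_lt hw₂)
  have hprod : w₁ * w₂ ≠ (r : ℂ) ^ 2 := by
    intro h0
    have := congrArg norm h0
    rw [norm_mul, norm_pow, norm_real, Real.norm_eq_abs, sq_abs] at this
    nlinarith [mul_lt_mul'' hw₁ hw₂ hr hr]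
  have key : (w₁ - w₂) * (w₁ * w₂ - (r : ℂ) ^ 2) = 0 := by
    simp only [joukowski] at h
    field_simp at h
    linear_combination h
  exact sub_eq_zero.1 ((mul_eq_zero.1 key).resolve_right (sub_ne_zero.2 hprod))

theorem eq_add_of_mul_eq (hr : r ≠ 0) {w w' : ℂ} (h : w * w' = (r : ℂ) ^ 2) :
    joukowski r w = w + w' := by
  have hw : w ≠ 0 := left_ne_zero_of_mul (h ▸ pow_ne_zero 2 (ofReal_ne_zero.2 hr))
  rw [joukowski, ← h, mul_div_cancel_left₀ _ hw]

theorem exists_le_norm_eq (hr : 0 < r) (ζ : ℂ) : ∃ w, r ≤ ‖w‖ ∧ joukowski r w = ζ := by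
  -- `(ζ ± s) / 2` are the roots of `w² - ζ w + r²`
  obtain ⟨s, hs⟩ := IsAlgClosed.exists_pow_nat_eq (ζ ^ 2 - 4 * (r : ℂ) ^ 2) two_pos
  have hprod : (ζ + s) / 2 * ((ζ - s) / 2) = (r : ℂ) ^ 2 := by linear_combination -hs / 4
  by_cases h : r ≤ ‖(ζ + s) / 2‖
  · exact ⟨_, h, by rw [eq_add_of_mul_eq hr.ne' hprod]; ring⟩
  · refine ⟨(ζ - s) / 2, ?_, by rw [eq_add_of_mul_eq hr.ne' (by rw [mul_comm, hprod])]; ring⟩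
    have := congrArg norm hprod
    rw [norm_mul, norm_pow, norm_real, Real.norm_eq_abs, sq_abs] at this
    by_contra h'
    push Not at h h'
    nlinarith [mul_lt_mul'' h h' (norm_nonneg _) (norm_nonneg _)]

theorem image_upperHalfPlane_diff_closedBall (hr : 0 < r) :
    joukowski r '' ({w | 0 < w.im} \ Metric.closedBall 0 r) = {w | 0 < w.im} := by
  ext ζ
  simp only [mem_image, mem_sdiff, mem_ofPred_eq, mem_closedBall_zero_iff, not_le]
  constructor
  · rintro ⟨w, ⟨hw, hwr⟩, rfl⟩
    exact im_pos hr.le hw hwr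
  · intro hζ
    obtain ⟨w, hwr, rfl⟩ := exists_le_norm_eq hr ζ
    exact ⟨w, im_pos_and_lt_norm_of_im_pos hr.le hwr hζ, rfl⟩

end joukowski

theorem gMap_eq_joukowski (x ε : ℝ) (z : ℂ) : gMap x ε z = joukowski ε (z - x) + x := by
  rw [gMap, joukowski]; ring

theorem gMap_conformal_upperHalfPlane_general (x ε : ℝ) (hε : 0 < ε) :
    (∀ z ∈ {z : ℂ | 0 < z.im} \ Metric.closedBall (x : ℂ) ε,
        DifferentiableAt ℂ (gMap x ε) z) ∧
    Set.InjOn (gMap x ε) ({z : ℂ | 0 < z.im} \ Metric.closedBall (x : ℂ) ε) ∧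
    gMap x ε '' ({z : ℂ | 0 < z.im} \ Metric.closedBall (x : ℂ) ε) = {z : ℂ | 0 < z.im} := by
  have hdom : {z : ℂ | 0 < z.im} \ Metric.closedBall (x : ℂ) ε =
      (· + (x : ℂ)) '' ({w | 0 < w.im} \ Metric.closedBall 0 ε) := by
    rw [image_add_right]
    ext z
    simp [Complex.dist_eq]
  have hgMap : gMap x ε ∘ (· + (x : ℂ)) = (· + (x : ℂ)) ∘ joukowski ε := by
    ext1 w; simp [gMap_eq_joukowski]
  refine ⟨fun z hz => ?_, ?_, ?_⟩
  · have hz : z - x ≠ 0 := sub_ne_zero.2 fun h => hz.2 (by simp [h, hε.le])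
    unfold gMap
    fun_prop (disch := exact hz)
  · rw [hdom]
    refine InjOn.image_of_comp ?_
    rw [hgMap]
    exact (add_left_injective _).comp_injOn <|
      (joukowski.injOn hε.le).mono fun w hw => by simpa using hw.2
  · rw [hdom, ← image_comp, hgMap, image_comp,
      joukowski.image_upperHalfPlane_diff_closedBall hε]
    ext z
    simp

/-- For `x ∈ ℝ \ {0}` and `0 < ε < |x|`, `g_{x,ε}` is a holomorphic bijection from
`ℍ \ B̄(x,ε)` onto the upper half-plane `ℍ`. -/
theorem gMap_conformal_upperHalfPlane (x ε : ℝ) (hx : x ≠ 0) (hε : 0 < ε) (hεx : ε < |x|) :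
    (∀ z ∈ {z : ℂ | 0 < z.im} \ Metric.closedBall (x : ℂ) ε,
        DifferentiableAt ℂ (gMap x ε) z) ∧
    Set.InjOn (gMap x ε) ({z : ℂ | 0 < z.im} \ Metric.closedBall (x : ℂ) ε) ∧
    gMap x ε '' ({z : ℂ | 0 < z.im} \ Metric.closedBall (x : ℂ) ε) = {z : ℂ | 0 < z.im} :=
  gMap_conformal_upperHalfPlane_general x ε hε
end

section
/- Define F(x,y) = (1 + x² + y² + xy)/(x(1+x²)) + 1/(y-x) for x,y ∈ ℝ \ {0}, x ≠ y. Then F(x,y) = lim_{ε→0} (f_{x,ε}(y) - y)/ε², where f_{x,ε} is the conformal map from ℍ \ B̄(x,ε) onto ℍ fixing 0 and i obtained by post-composing g_{x,ε}(z) = z + ε²/(z-x) with the Möbius transformation z ↦ b(z - c)/(b² + (c-a)(z - a)), where a = Re g_{x,ε}(i), b = Im g_{x,ε}(i), c = g_{x,ε}(0). -/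
open Complex Filter

/-- The normalized conformal map `f_{x,ε}` from `ℍ \ B̄(x,ε)` onto `ℍ` fixing `0` and `i`,
obtained by post-composing `g_{x,ε}` with the Möbius map `z ↦ b(z-c)/(b² + (c-a)(z-a))`
where `a = Re g_{x,ε}(i)`, `b = Im g_{x,ε}(i)`, `c = g_{x,ε}(0)`. -/
noncomputable def fMap (x ε : ℝ) (z : ℂ) : ℂ :=
  let a : ℂ := ((gMap x ε Complex.I).re : ℝ)
  let b : ℂ := ((gMap x ε Complex.I).im : ℝ)
  let c : ℂ := gMap x ε 0
  b * (gMap x ε z - c) / (b^2 + (c - a) * (gMap x ε z - a))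

open Topology

/-!
Write `t = ε²`. The data `a`, `b`, `c` and `g_{x,ε}(y)` of `f_{x,ε}(y)` are affine in `t`, and
at `t = 0` the Möbius map is the identity. Hence `(f_{x,ε}(y) - y)/ε²` is a difference quotient
at `t = 0` of a rational function of `t`; its limit is the derivative of that function, which
the quotient rule gives as `F(x,y)`.
-/

noncomputable def moebiusNormalize (a b c w : ℂ) : ℂ :=
  b * (w - c) / (b ^ 2 + (c - a) * (w - a))

theorem hasDerivAt_moebiusNormalize_linear (α β γ δ y : ℂ) :
    HasDerivAt (fun t => moebiusNormalize (t * α) (1 - t * β) (t * γ) (y + t * δ))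
      (δ - γ + β * y - (γ - α) * y ^ 2) 0 := by
  have hlin (u v : ℂ) : HasDerivAt (fun t : ℂ => u + t * v) v 0 := by
    simpa using ((hasDerivAt_id' (0 : ℂ)).mul_const v).const_add u
  have hb := hlin 1 (-β)
  have hwc := hlin y (δ - γ)
  have hca := hlin 0 (γ - α)
  have hwa := hlin y (δ - α)
  have hquot := (hb.fun_mul hwc).fun_div ((hb.fun_pow 2).fun_add (hca.fun_mul hwa)) (by simp)
  have hM : (fun t => moebiusNormalize (t * α) (1 - t * β) (t * γ) (y + t * δ)) = fun t =>
      (1 + t * -β) * (y + t * (δ - γ)) /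
        ((1 + t * -β) ^ 2 + (0 + t * (γ - α)) * (y + t * (δ - α))) := by
    funext t
    simp only [moebiusNormalize]
    ring
  rw [hM]
  refine hquot.congr_deriv ?_
  simp only [zero_mul, add_zero, neg_mul, mul_neg, neg_zero, one_mul, one_pow, mul_one,
    Nat.cast_ofNat, Nat.add_one_sub_one, div_one]
  ring

theorem gMap_I_re (x ε : ℝ) : (gMap x ε I).re = ε ^ 2 * (-x / (1 + x ^ 2)) := by
  have hsub : I - x = ⟨-x, 1⟩ := by apply Complex.ext <;> simp
  simp only [gMap, ← ofReal_pow, hsub, add_re, I_re, div_re, ofReal_re, mul_neg, normSq_mk,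
    neg_mul, neg_neg, mul_one, ofReal_im, zero_div, add_zero, zero_add]
  ring

theorem gMap_I_im (x ε : ℝ) : (gMap x ε I).im = 1 - ε ^ 2 * (1 / (1 + x ^ 2)) := by
  have hsub : I - x = ⟨-x, 1⟩ := by apply Complex.ext <;> simp
  simp only [gMap, ← ofReal_pow, hsub, add_im, I_im, div_im, ofReal_im, mul_neg, zero_mul,
    neg_zero, normSq_mk, neg_mul, neg_neg, mul_one, zero_div, ofReal_re, zero_sub, one_div]
  ring

theorem gMap_zero (x ε : ℝ) : gMap x ε 0 = (ε : ℂ) ^ 2 * (-1 / x) := by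
  rw [gMap, zero_add, zero_sub]
  ring

theorem fMap_ofReal (x ε y : ℝ) :
    fMap x ε y = moebiusNormalize ((ε : ℂ) ^ 2 * (-x / (1 + x ^ 2)))
      (1 - (ε : ℂ) ^ 2 * (1 / (1 + x ^ 2))) ((ε : ℂ) ^ 2 * (-1 / x))
      (y + (ε : ℂ) ^ 2 * (1 / (y - x))) := by
  change moebiusNormalize (gMap x ε I).re (gMap x ε I).im (gMap x ε 0) (gMap x ε y) = _
  rw [gMap_I_re, gMap_I_im, gMap_zero, gMap, mul_one_div]
  push_cast
  congr 1 <;> ring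

theorem tendsto_ofReal_sq_nhdsGT_nhdsNE :
    Tendsto (fun ε : ℝ => (ε : ℂ) ^ 2) (𝓝[>] 0) (𝓝[≠] 0) := by
  refine tendsto_nhdsWithin_iff.2 ⟨?_, eventually_mem_nhdsWithin.mono fun ε hε => ?_⟩
  · exact ((Complex.continuous_ofReal.pow 2).tendsto' 0 0 (by simp)).mono_left nhdsWithin_le_nhds
  · exact pow_ne_zero 2 (Complex.ofReal_ne_zero.2 (ne_of_gt hε))

theorem fMap_first_order_expansion_general (x y : ℝ) (hx : x ≠ 0) :
    Tendsto (fun ε : ℝ => (fMap x ε (y : ℂ) - (y : ℂ)) / (ε : ℂ)^2)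
      (nhdsWithin 0 (Set.Ioi 0))
      (nhds (((1 + x^2 + y^2 + x*y) / (x * (1 + x^2)) + 1 / (y - x) : ℝ) : ℂ)) := by
  have hderiv := hasDerivAt_moebiusNormalize_linear (-x / (1 + x ^ 2)) (1 / (1 + x ^ 2)) (-1 / x)
    (1 / (y - x)) y
  have hF :
      (1 / (y - x) - -1 / x + 1 / (1 + x ^ 2) * y - (-1 / x - -x / (1 + x ^ 2)) * y ^ 2 : ℂ) =
      (((1 + x^2 + y^2 + x*y) / (x * (1 + x^2)) + 1 / (y - x) : ℝ) : ℂ) := by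
    have hx' : (x : ℂ) ≠ 0 := by exact_mod_cast hx
    have hx2 : (1 + x ^ 2 : ℂ) ≠ 0 := by exact_mod_cast (by positivity : 1 + x ^ 2 ≠ 0)
    push_cast
    field_simp
    ring
  rw [hF, hasDerivAt_iff_tendsto_slope] at hderiv
  refine (hderiv.comp tendsto_ofReal_sq_nhdsGT_nhdsNE).congr fun ε => ?_
  simp [slope, fMap_ofReal, moebiusNormalize, div_eq_inv_mul]

/-- `F(x,y) = lim_{ε→0} (f_{x,ε}(y) - y)/ε²` with
`F(x,y) = (1+x²+y²+xy)/(x(1+x²)) + 1/(y-x)`. -/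
theorem fMap_first_order_expansion (x y : ℝ) (hx : x ≠ 0) (hy : y ≠ 0) (hxy : y ≠ x) :
    Tendsto (fun ε : ℝ => (fMap x ε (y : ℂ) - (y : ℂ)) / (ε : ℂ)^2)
      (nhdsWithin 0 (Set.Ioi 0))
      (nhds (((1 + x^2 + y^2 + x*y) / (x * (1 + x^2)) + 1 / (y - x) : ℝ) : ℂ)) :=
  fMap_first_order_expansion_general x y hx
end

section
/- Let λ : ℝ \ {0} → ℝ be three times differentiable and satisfy, for all distinct nonzero x, y: λ'(y)F(x,y) + 2λ(y)G(x,y) = λ'(x)F(y,x) + 2λ(x)G(y,x), where F(x,y) = (1+x²+y²+xy)/(x(1+x²)) + 1/(y-x) and G(x,y) = (x+2y)/(x(1+x²)) - 1/(y-x)². Then λ satisfies the third-order ODE x²(1+x²)²λ'''(x) + 6x(1+x²)(1+3x²)λ''(x) + 6(1+12x²+15x⁴)λ'(x) + 24x(2+5x²)λ(x) = 0 for all x ≠ 0. -/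
/-!
Write `F x y = regularF x y + 1/(y-x)` and `G x y = regularG x y - 1/(y-x)²`. Multiplied by
`(y-x)²`, the commutation relation reads `(y-x)² U(y) = 2(λ(y) - λ(x)) - (y-x)(λ'(y) + λ'(x))`,
where `U = regularPart λ x` collects the regular terms. The right side is twice the error of the
trapezoidal rule for `∫ₓʸ λ'`, i.e. `-λ'''(x)(y-x)³/6 + o((y-x)³)` (two applications of
L'Hôpital's rule), so `λ'''(x) = -6 U'(x)`; computing `U'(x)` gives the ODE.
-/

open Filter Topology

section

variable {f f' f'' : ℝ → ℝ} {a : ℝ}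

theorem tendsto_taylor_remainder_div_sq {b : ℝ}
    (hf : ∀ᶠ y in 𝓝 a, HasDerivAt f (f' y) y) (hf' : HasDerivAt f' b a) :
    Tendsto (fun y => (f y - f a - f' a * (y - a)) / (y - a) ^ 2) (𝓝[≠] a) (𝓝 (b / 2)) := by
  have hfa : ContinuousAt f a := hf.self_of_nhds.continuousAt
  refine HasDerivAt.lhopital_zero_nhdsNE (f' := fun y => f' y - f' a) (g' := fun y => 2 * (y - a))
    ?_ ?_ ?_ ?_ ?_ ?_
  · filter_upwards [eventually_nhdsWithin_of_eventually_nhds hf] with y hy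
    exact ((hy.sub_const (f a)).sub (((hasDerivAt_id' y).sub_const a).const_mul (f' a))).congr_deriv
      (by ring)
  · refine Eventually.of_forall fun y => ?_
    exact (((hasDerivAt_id' y).sub_const a).pow 2).congr_deriv (by push_cast; ring)
  · filter_upwards [self_mem_nhdsWithin] with y hy
    exact mul_ne_zero two_ne_zero (sub_ne_zero.mpr hy)
  · have : ContinuousAt (fun y => f y - f a - f' a * (y - a)) a := by fun_prop
    simpa using this.tendsto.mono_left nhdsWithin_le_nhds
  · have : ContinuousAt (fun y : ℝ => (y - a) ^ 2) a := by fun_prop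
    simpa using this.tendsto.mono_left nhdsWithin_le_nhds
  · refine ((hasDerivAt_iff_tendsto_slope.mp hf').div_const 2).congr fun y => ?_
    rw [slope_def_field, div_div, mul_comm]

theorem tendsto_trapezoid_error_div_cube {c : ℝ}
    (hf : ∀ᶠ y in 𝓝 a, HasDerivAt f (f' y) y) (hf' : ∀ᶠ y in 𝓝 a, HasDerivAt f' (f'' y) y)
    (hf'' : HasDerivAt f'' c a) :
    Tendsto (fun y => ((y - a) * (f' y + f' a) - 2 * (f y - f a)) / (y - a) ^ 3) (𝓝[≠] a)
      (𝓝 (c / 6)) := by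
  have hfa : ContinuousAt f a := hf.self_of_nhds.continuousAt
  have hf'a : ContinuousAt f' a := hf'.self_of_nhds.continuousAt
  refine HasDerivAt.lhopital_zero_nhdsNE
    (f' := fun y => (y - a) * f'' y - (f' y - f' a)) (g' := fun y => 3 * (y - a) ^ 2)
    ?_ ?_ ?_ ?_ ?_ ?_
  · filter_upwards [eventually_nhdsWithin_of_eventually_nhds hf,
      eventually_nhdsWithin_of_eventually_nhds hf'] with y hy hy'
    exact ((((hasDerivAt_id' y).sub_const a).mul (hy'.add_const (f' a))).sub
      ((hy.sub_const (f a)).const_mul 2)).congr_deriv (by ring)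
  · refine Eventually.of_forall fun y => ?_
    exact (((hasDerivAt_id' y).sub_const a).pow 3).congr_deriv (by push_cast; ring)
  · filter_upwards [self_mem_nhdsWithin] with y hy
    exact mul_ne_zero three_ne_zero (pow_ne_zero 2 (sub_ne_zero.mpr hy))
  · have : ContinuousAt (fun y => (y - a) * (f' y + f' a) - 2 * (f y - f a)) a := by fun_prop
    simpa using this.tendsto.mono_left nhdsWithin_le_nhds
  · have : ContinuousAt (fun y : ℝ => (y - a) ^ 3) a := by fun_prop
    simpa using this.tendsto.mono_left nhdsWithin_le_nhds
  · -- `(y - a) f''(y) - (f'(y) - f'(a))` is a slope of `f''` minus the Taylor remainder of `f'`.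
    have h := ((hasDerivAt_iff_tendsto_slope.mp hf'').sub
      (tendsto_taylor_remainder_div_sq hf' hf'')).div_const 3
    rw [show (c - c / 2) / 3 = c / 6 by ring] at h
    refine h.congr' ?_
    filter_upwards [self_mem_nhdsWithin] with y hy
    have hy' : y - a ≠ 0 := sub_ne_zero.mpr hy
    rw [slope_def_field]
    field_simp
    ring

theorem eq_neg_six_mul_of_sq_mul_eq_trapezoid_error {U : ℝ → ℝ} {c U' : ℝ}
    (hf : ∀ᶠ y in 𝓝 a, HasDerivAt f (f' y) y) (hf' : ∀ᶠ y in 𝓝 a, HasDerivAt f' (f'' y) y)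
    (hf'' : HasDerivAt f'' c a) (hU : HasDerivAt U U' a)
    (h : ∀ᶠ y in 𝓝[≠] a, (y - a) ^ 2 * U y = 2 * (f y - f a) - (y - a) * (f' y + f' a)) :
    c = -6 * U' := by
  have hquot : Tendsto (fun y => U y / (y - a)) (𝓝[≠] a) (𝓝 (-(c / 6))) := by
    refine (tendsto_trapezoid_error_div_cube hf hf' hf'').neg.congr' ?_
    filter_upwards [h, self_mem_nhdsWithin] with y hy hya
    have hya' : y - a ≠ 0 := sub_ne_zero.mpr hya
    have hUy : U y = (2 * (f y - f a) - (y - a) * (f' y + f' a)) / (y - a) ^ 2 := by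
      rw [← hy]; field_simp
    rw [hUy]
    field_simp
    ring
  have hUa : U a = 0 := by
    have hlin : Tendsto (fun y : ℝ => y - a) (𝓝[≠] a) (𝓝 0) := by
      have : ContinuousAt (fun y : ℝ => y - a) a := by fun_prop
      simpa using this.tendsto.mono_left nhdsWithin_le_nhds
    have h0 : Tendsto U (𝓝[≠] a) (𝓝 0) := by
      refine (zero_mul (-(c / 6)) ▸ hlin.mul hquot).congr' ?_
      filter_upwards [self_mem_nhdsWithin] with y hy
      field_simp [sub_ne_zero.mpr hy]
    exact tendsto_nhds_unique (hU.continuousAt.tendsto.mono_left nhdsWithin_le_nhds) h0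
  have hslope : Tendsto (fun y => U y / (y - a)) (𝓝[≠] a) (𝓝 U') := by
    refine (hasDerivAt_iff_tendsto_slope.mp hU).congr fun y => ?_
    rw [slope_def_field, hUa, sub_zero]
  linarith [tendsto_nhds_unique hslope hquot]

end

noncomputable def regularF (x y : ℝ) : ℝ := (1 + x ^ 2 + y ^ 2 + x * y) / (x * (1 + x ^ 2))

noncomputable def regularG (x y : ℝ) : ℝ := (x + 2 * y) / (x * (1 + x ^ 2))

noncomputable def regularPart (lam : ℝ → ℝ) (x y : ℝ) : ℝ :=
  deriv lam y * regularF x y + 2 * lam y * regularG x y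
    - (deriv lam x * regularF y x + 2 * lam x * regularG y x)

theorem sq_mul_regularPart (lam : ℝ → ℝ) {x y : ℝ} (hxy : x ≠ y)
    (h : deriv lam y * (regularF x y + 1 / (y - x)) + 2 * lam y * (regularG x y - 1 / (y - x) ^ 2)
      = deriv lam x * (regularF y x + 1 / (x - y)) + 2 * lam x * (regularG y x - 1 / (x - y) ^ 2)) :
    (y - x) ^ 2 * regularPart lam x y
      = 2 * (lam y - lam x) - (y - x) * (deriv lam y + deriv lam x) := by
  have hyx : y - x ≠ 0 := sub_ne_zero.mpr hxy.symm
  have hxy' : x - y ≠ 0 := sub_ne_zero.mpr hxy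
  rw [show x - y = -(y - x) by ring] at h
  unfold regularPart
  linear_combination (norm := skip) (y - x) ^ 2 * h
  field_simp
  ring

theorem hasDerivAt_regularPart (lam : ℝ → ℝ) {x : ℝ} (hx : x ≠ 0)
    (h1 : DifferentiableAt ℝ lam x) (h2 : DifferentiableAt ℝ (deriv lam) x) :
    HasDerivAt (regularPart lam x)
      ((x * (1 + x ^ 2) * (1 + 3 * x ^ 2) * deriv (deriv lam) x
        + (1 + 12 * x ^ 2 + 15 * x ^ 4) * deriv lam x + 4 * x * (2 + 5 * x ^ 2) * lam x)
        / (x ^ 2 * (1 + x ^ 2) ^ 2)) x := by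
  have hx' : x * (1 + x ^ 2) ≠ 0 := by positivity
  have hid := hasDerivAt_id' x
  have hsq := hid.pow 2
  have hFx : HasDerivAt (regularF x) _ x :=
    ((hsq.const_add (1 + x ^ 2)).add (hid.const_mul x)).div_const (x * (1 + x ^ 2))
  have hGx : HasDerivAt (regularG x) _ x :=
    ((hid.const_mul 2).const_add x).div_const (x * (1 + x ^ 2))
  have hden : HasDerivAt (fun y : ℝ => y * (1 + y ^ 2)) _ x := hid.mul (hsq.const_add 1)
  have hFy : HasDerivAt (fun y => regularF y x) _ x :=
    (((hsq.const_add 1).add_const (x ^ 2)).add (hid.mul_const x)).div hden hx'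
  have hGy : HasDerivAt (fun y => regularG y x) _ x := (hid.add_const (2 * x)).div hden hx'
  exact (((h2.hasDerivAt.mul hFx).add ((h1.hasDerivAt.const_mul 2).mul hGx)).sub
    ((hFy.const_mul (deriv lam x)).add (hGy.const_mul (2 * lam x)))).congr_deriv (by
      simp only [regularF, regularG, Pi.add_apply, Pi.pow_apply]
      field_simp
      ring)

/-- The commutation relation
`λ'(y)F(x,y) + 2λ(y)G(x,y) = λ'(x)F(y,x) + 2λ(x)G(y,x)` for all distinct nonzero `x, y`,
with `F(x,y) = (1+x²+y²+xy)/(x(1+x²)) + 1/(y-x)` and `G(x,y) = (x+2y)/(x(1+x²)) - 1/(y-x)²`,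
implies the third-order ODE
`x²(1+x²)²λ''' + 6x(1+x²)(1+3x²)λ'' + 6(1+12x²+15x⁴)λ' + 24x(2+5x²)λ = 0` on `ℝ \ {0}`. -/
theorem commutation_relation_implies_ODE
    (lam : ℝ → ℝ)
    (hd1 : ∀ x : ℝ, x ≠ 0 → DifferentiableAt ℝ lam x)
    (hd2 : ∀ x : ℝ, x ≠ 0 → DifferentiableAt ℝ (deriv lam) x)
    (hd3 : ∀ x : ℝ, x ≠ 0 → DifferentiableAt ℝ (deriv (deriv lam)) x)
    (F : ℝ → ℝ → ℝ) (G : ℝ → ℝ → ℝ)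
    (hF : ∀ x y : ℝ, x ≠ 0 → y ≠ 0 → x ≠ y →
      F x y = (1 + x^2 + y^2 + x*y) / (x * (1 + x^2)) + 1 / (y - x))
    (hG : ∀ x y : ℝ, x ≠ 0 → y ≠ 0 → x ≠ y →
      G x y = (x + 2*y) / (x * (1 + x^2)) - 1 / (y - x)^2)
    (hcomm : ∀ x y : ℝ, x ≠ 0 → y ≠ 0 → x ≠ y →
      deriv lam y * F x y + 2 * lam y * G x y
        = deriv lam x * F y x + 2 * lam x * G y x) :
    ∀ x : ℝ, x ≠ 0 →
      x^2 * (1 + x^2)^2 * deriv (deriv (deriv lam)) x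
        + 6 * x * (1 + x^2) * (1 + 3*x^2) * deriv (deriv lam) x
        + 6 * (1 + 12*x^2 + 15*x^4) * deriv lam x
        + 24 * x * (2 + 5*x^2) * lam x = 0 := by
  intro x hx
  have hnear : ∀ᶠ y in 𝓝 x, y ≠ 0 := eventually_ne_nhds hx
  have hrel : ∀ᶠ y in 𝓝[≠] x, (y - x) ^ 2 * regularPart lam x y
      = 2 * (lam y - lam x) - (y - x) * (deriv lam y + deriv lam x) := by
    filter_upwards [eventually_nhdsWithin_of_eventually_nhds hnear, self_mem_nhdsWithin]
      with y hy hyx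
    have h := hcomm x y hx hy (Ne.symm hyx)
    rw [hF x y hx hy (Ne.symm hyx), hG x y hx hy (Ne.symm hyx), hF y x hy hx hyx,
      hG y x hy hx hyx] at h
    exact sq_mul_regularPart lam (Ne.symm hyx) h
  have hthird := eq_neg_six_mul_of_sq_mul_eq_trapezoid_error
    (hnear.mono fun y hy => (hd1 y hy).hasDerivAt) (hnear.mono fun y hy => (hd2 y hy).hasDerivAt)
    (hd3 x hx).hasDerivAt (hasDerivAt_regularPart lam hx (hd1 x hx) (hd2 x hx)) hrel
  rw [hthird]
  field_simp
  ring
end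

section
/- Suppose a probability measure P on closed subsets K of the closed unit disc satisfies P[K ∩ A = ∅] = |Φ'_A(0)|^α · Φ'_A(1)^β for all admissible hulls A, where Φ_A : 𝕌\A → 𝕌 is the conformal map fixing 0 and 1. If P₀ with exponents (α₀, β) exists and (γ_j)_{j∈J} is an independent Poisson point process of Brownian loops in 𝕌 surrounding 0 with intensity (α₀-α)μ⁰ (for α < α₀), satisfying P[∀j, γ_j ∩ A = ∅] = |Φ'_A(0)|^{α-α₀}, then the closure K of the union of K₀ and the closed regions bounded by the loops γ_j satisfies P[K ∩ A = ∅] = |Φ'_A(0)|^α Φ'_A(1)^β for all admissible A. -/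
open MeasureTheory Set Metric

/-- An admissible hull: a closed subset `A` of the closed unit disc with
`A = closure(A ∩ 𝕌)`, such that `𝕌 \ A` is simply connected, contains `0` and has `1`
on its boundary. -/
def AdmissibleHull (A : Set ℂ) : Prop :=
  IsClosed A ∧ A ⊆ Metric.closedBall 0 1 ∧ A = closure (A ∩ Metric.ball 0 1) ∧
  SimplyConnectedSpace ↥(Metric.ball (0:ℂ) 1 \ A) ∧
  (0:ℂ) ∈ Metric.ball (0:ℂ) 1 \ A ∧
  (1:ℂ) ∈ frontier (Metric.ball (0:ℂ) 1 \ A)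

theorem closure_union_inter_eq_empty_iff {X : Type*} [TopologicalSpace X] {K L A : Set X}
    (hK : IsClosed K) (hL : IsClosed L) :
    closure (K ∪ L) ∩ A = ∅ ↔ K ∩ A = ∅ ∧ L ∩ A = ∅ := by
  rw [(hK.union hL).closure_eq, union_inter_distrib_right, union_empty_iff]

theorem ENNReal.ofReal_rpow_mul_mul_ofReal_rpow_sub {x : ℝ} (hx : 0 < x) (a c y : ℝ) :
    ENNReal.ofReal (x ^ a * y) * ENNReal.ofReal (x ^ (c - a)) = ENNReal.ofReal (x ^ c * y) := by
  rw [← ENNReal.ofReal_mul' (Real.rpow_nonneg hx.le _), mul_right_comm, ← Real.rpow_add hx,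
    add_sub_cancel]

/-- Here `phi0 A` stands for `|Φ'_A(0)|` and `phi1 A` for `Φ'_A(1)`. -/
theorem loop_soup_lowers_alpha_general
    {Ω : Type*} [MeasurableSpace Ω] (P : Measure Ω)
    (K₀ L : Ω → Set ℂ)                                  -- sample of P₀ and union of loops
    (hclosed : ∀ ω, IsClosed (K₀ ω) ∧ IsClosed (L ω))
    (phi0 phi1 : Set ℂ → ℝ)
    (hphi0 : ∀ A, AdmissibleHull A → 1 ≤ phi0 A)
    (α α₀ β : ℝ)
    (hK0 : ∀ A, AdmissibleHull A →
      P {ω | K₀ ω ∩ A = ∅} = ENNReal.ofReal (phi0 A ^ α₀ * phi1 A ^ β))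
    (hL : ∀ A, AdmissibleHull A →
      P {ω | L ω ∩ A = ∅} = ENNReal.ofReal (phi0 A ^ (α - α₀)))
    (hindep : ∀ A, AdmissibleHull A →
      P ({ω | K₀ ω ∩ A = ∅} ∩ {ω | L ω ∩ A = ∅})
        = P {ω | K₀ ω ∩ A = ∅} * P {ω | L ω ∩ A = ∅}) :
    ∀ A, AdmissibleHull A →
      P {ω | closure (K₀ ω ∪ L ω) ∩ A = ∅}
        = ENNReal.ofReal (phi0 A ^ α * phi1 A ^ β) := by
  intro A hA
  have hphi0_pos : 0 < phi0 A := one_pos.trans_le (hphi0 A hA)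
  have hevent : {ω | closure (K₀ ω ∪ L ω) ∩ A = ∅}
      = {ω | K₀ ω ∩ A = ∅} ∩ {ω | L ω ∩ A = ∅} :=
    Set.ext fun ω => closure_union_inter_eq_empty_iff (hclosed ω).1 (hclosed ω).2
  rw [hevent, hindep A hA, hK0 A hA, hL A hA,
    ENNReal.ofReal_rpow_mul_mul_ofReal_rpow_sub hphi0_pos]

/-- Adding an independent Poisson loop soup of intensity `(α₀-α)μ⁰` to a radial restriction
sample of exponents `(α₀, β)` produces a set satisfying the radial restriction formula with
exponents `(α, β)`. Here `phi0 A` stands for `|Φ'_A(0)|` and `phi1 A` for `Φ'_A(1)`. -/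
theorem loop_soup_lowers_alpha
    {Ω : Type*} [MeasurableSpace Ω] (P : Measure Ω) [IsProbabilityMeasure P]
    (K₀ L : Ω → Set ℂ)                                  -- sample of P₀ and union of loops
    (hclosed : ∀ ω, IsClosed (K₀ ω) ∧ IsClosed (L ω))
    (phi0 phi1 : Set ℂ → ℝ)
    (hphi0 : ∀ A, AdmissibleHull A → 1 ≤ phi0 A)
    (hphi1 : ∀ A, AdmissibleHull A → 0 < phi1 A ∧ phi1 A ≤ 1)
    (α α₀ β : ℝ) (hα : α < α₀)
    (hK0 : ∀ A, AdmissibleHull A →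
      P {ω | K₀ ω ∩ A = ∅} = ENNReal.ofReal (phi0 A ^ α₀ * phi1 A ^ β))
    (hL : ∀ A, AdmissibleHull A →
      P {ω | L ω ∩ A = ∅} = ENNReal.ofReal (phi0 A ^ (α - α₀)))
    (hindep : ∀ A, AdmissibleHull A →
      P ({ω | K₀ ω ∩ A = ∅} ∩ {ω | L ω ∩ A = ∅})
        = P {ω | K₀ ω ∩ A = ∅} * P {ω | L ω ∩ A = ∅}) :
    ∀ A, AdmissibleHull A →
      P {ω | closure (K₀ ω ∪ L ω) ∩ A = ∅}
        = ENNReal.ofReal (phi0 A ^ α * phi1 A ^ β) :=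
  loop_soup_lowers_alpha_general P K₀ L hclosed phi0 phi1 hphi0 α α₀ β hK0 hL hindep
end
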